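/- Any strictly increasing chain ≻₁ ⊂ ≻₂ ⊂ … ⊂ ≻_k of full p-skyline relations over an attribute set 𝒜 has length k at most |𝒜|·(|𝒜|−1) + 1. -/
import Mathlib


/-- p-expressions over attribute set `ι`: atomic attribute preferences combined
by prioritized accumulation (`prio`, &) and Pareto accumulation (`pareto`, ⊗). -/
inductive PExpr (ι : Type*) where
  | atom : ι → PExpr ι
  | prio : PExpr ι → PExpr ι → PExpr ι
  | pareto : PExpr ι → PExpr ι → PExpr ι

namespace PExpr

/-- Relevant attributes of a p-expression. -/
def vars {ι : Type*} : PExpr ι → Set ι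
  | atom i => {i}
  | prio e₁ e₂ => e₁.vars ∪ e₂.vars
  | pareto e₁ e₂ => e₁.vars ∪ e₂.vars

/-- Well-formedness: at every accumulation the relevant attribute sets of the two
arguments are disjoint (so each attribute is used at most once). -/
def wf {ι : Type*} : PExpr ι → Prop
  | atom _ => True
  | prio e₁ e₂ => e₁.wf ∧ e₂.wf ∧ Disjoint e₁.vars e₂.vars
  | pareto e₁ e₂ => e₁.wf ∧ e₂.wf ∧ Disjoint e₁.vars e₂.vars

/-- Edge set of the p-graph of a p-expression. -/
def edges {ι : Type*} : PExpr ι → Set (ι × ι)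
  | atom _ => ∅
  | prio e₁ e₂ => e₁.edges ∪ e₂.edges ∪ e₁.vars ×ˢ e₂.vars
  | pareto e₁ e₂ => e₁.edges ∪ e₂.edges

/-- The tuple preference relation induced by a p-expression. -/
def rel {ι : Type*} {D : ι → Type*} [∀ i, LinearOrder (D i)] :
    PExpr ι → (∀ i, D i) → (∀ i, D i) → Prop
  | atom i, o, o' => o' i < o i
  | prio e₁ e₂, o, o' =>
      e₁.rel o o' ∨ ((∀ i ∈ e₁.vars, o i = o' i) ∧ e₂.rel o o')
  | pareto e₁ e₂, o, o' =>
      (e₁.rel o o' ∧ ∀ i ∈ e₂.vars, o i = o' i) ∨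
      (e₂.rel o o' ∧ ∀ i ∈ e₁.vars, o i = o' i) ∨
      (e₁.rel o o' ∧ e₂.rel o o')

end PExpr

namespace PExprAux
open PExpr

variable {ι : Type*}

lemma edges_subset (e : PExpr ι) : e.edges ⊆ e.vars ×ˢ e.vars := by
  induction e with
  | atom i => simp [PExpr.edges]
  | prio e₁ e₂ ih₁ ih₂ =>
    intro p hp
    simp only [PExpr.edges, PExpr.vars, Set.mem_union] at hp
    simp only [PExpr.vars, Set.mem_prod, Set.mem_union]
    rcases hp with (h | h) | h
    · have := ih₁ h; simp only [Set.mem_prod] at this; tauto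
    · have := ih₂ h; simp only [Set.mem_prod] at this; tauto
    · simp only [Set.mem_prod] at h; tauto
  | pareto e₁ e₂ ih₁ ih₂ =>
    intro p hp
    simp only [PExpr.edges, Set.mem_union] at hp
    simp only [PExpr.vars, Set.mem_prod, Set.mem_union]
    rcases hp with h | h
    · have := ih₁ h; simp only [Set.mem_prod] at this; tauto
    · have := ih₂ h; simp only [Set.mem_prod] at this; tauto

lemma edges_irrefl (e : PExpr ι) : e.wf → ∀ a, (a, a) ∉ e.edges := by
  induction e with
  | atom i => intro _ a; simp [PExpr.edges]
  | prio e₁ e₂ ih₁ ih₂ =>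
    rintro ⟨h1, h2, hd⟩ a ha
    simp only [PExpr.edges, Set.mem_union, Set.mem_prod] at ha
    rcases ha with (h | h) | ⟨ha1, ha2⟩
    · exact ih₁ h1 a h
    · exact ih₂ h2 a h
    · exact Set.disjoint_left.mp hd ha1 ha2
  | pareto e₁ e₂ ih₁ ih₂ =>
    rintro ⟨h1, h2, _⟩ a ha
    simp only [PExpr.edges, Set.mem_union] at ha
    rcases ha with h | h
    · exact ih₁ h1 a h
    · exact ih₂ h2 a h

variable {D : ι → Type*} [∀ i, LinearOrder (D i)]

/-- The p-graph characterization of the preference relation. -/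
def sat (e : PExpr ι) (o o' : ∀ i, D i) : Prop :=
  (∃ i ∈ e.vars, o i ≠ o' i) ∧
  ∀ i ∈ e.vars, o' i < o i ∨ o i = o' i ∨ ∃ j, (j, i) ∈ e.edges ∧ o' j < o j

lemma rel_iff_sat (e : PExpr ι) : e.wf → ∀ o o' : ∀ i, D i, (e.rel o o' ↔ sat e o o') := by
  induction e with
  | atom i =>
    intro _ o o'
    constructor
    · intro h
      refine ⟨⟨i, rfl, h.ne'⟩, ?_⟩
      intro j hj
      simp only [PExpr.vars, Set.mem_singleton_iff] at hj
      subst hj; exact Or.inl h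
    · rintro ⟨⟨j, hj, hne⟩, hall⟩
      simp only [PExpr.vars, Set.mem_singleton_iff] at hj
      subst hj
      rcases hall j rfl with h | h | ⟨j', hj', _⟩
      · exact h
      · exact absurd h hne
      · simp [PExpr.edges] at hj'
  | prio e₁ e₂ ih₁ ih₂ =>
    rintro ⟨h1, h2, hd⟩ o o'
    have hE₁ := edges_subset e₁
    have hE₂ := edges_subset e₂
    constructor
    · intro h
      rcases h with r₁ | ⟨heq, r₂⟩
      · obtain ⟨⟨i₀, hi₀, hne⟩, hg⟩ := (ih₁ h1 o o').mp r₁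
        -- find a witness in V₁ with o' j < o j
        obtain ⟨jw, hjw, hjwlt⟩ : ∃ j ∈ e₁.vars, o' j < o j := by
          rcases hg i₀ hi₀ with h | h | ⟨j, hjE, hjlt⟩
          · exact ⟨i₀, hi₀, h⟩
          · exact absurd h hne
          · exact ⟨j, (hE₁ hjE).1, hjlt⟩
        refine ⟨⟨i₀, Or.inl hi₀, hne⟩, ?_⟩
        intro i hi
        rcases hi with hi | hi
        · rcases hg i hi with h | h | ⟨j, hjE, hjlt⟩
          · exact Or.inl h
          · exact Or.inr (Or.inl h)
          · exact Or.inr (Or.inr ⟨j, Or.inl (Or.inl hjE), hjlt⟩)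
        · by_cases hi1 : i ∈ e₁.vars
          · rcases hg i hi1 with h | h | ⟨j, hjE, hjlt⟩
            · exact Or.inl h
            · exact Or.inr (Or.inl h)
            · exact Or.inr (Or.inr ⟨j, Or.inl (Or.inl hjE), hjlt⟩)
          · exact Or.inr (Or.inr ⟨jw, Or.inr ⟨hjw, hi⟩, hjwlt⟩)
      · obtain ⟨⟨i₀, hi₀, hne⟩, hg⟩ := (ih₂ h2 o o').mp r₂
        refine ⟨⟨i₀, Or.inr hi₀, hne⟩, ?_⟩
        intro i hi
        rcases hi with hi | hi
        · exact Or.inr (Or.inl (heq i hi))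
        · rcases hg i hi with h | h | ⟨j, hjE, hjlt⟩
          · exact Or.inl h
          · exact Or.inr (Or.inl h)
          · exact Or.inr (Or.inr ⟨j, Or.inl (Or.inr hjE), hjlt⟩)
    · rintro ⟨⟨i₀, hi₀, hne⟩, hg⟩
      by_cases hA : ∃ i ∈ e₁.vars, o i ≠ o' i
      · left
        obtain ⟨i₁, hi₁, hne₁⟩ := hA
        refine (ih₁ h1 o o').mpr ⟨⟨i₁, hi₁, hne₁⟩, ?_⟩
        intro i hi
        rcases hg i (Or.inl hi) with h | h | ⟨j, hjE, hjlt⟩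
        · exact Or.inl h
        · exact Or.inr (Or.inl h)
        · rcases hjE with (h' | h') | ⟨_, hi2⟩
          · exact Or.inr (Or.inr ⟨j, h', hjlt⟩)
          · exact absurd (hE₂ h').2 (Set.disjoint_left.mp hd hi)
          · exact absurd hi2 (Set.disjoint_left.mp hd hi)
      · push_neg at hA
        right
        have hi₀' : i₀ ∈ e₂.vars := by
          rcases hi₀ with h | h
          · exact absurd (hA i₀ h) hne
          · exact h
        refine ⟨hA, (ih₂ h2 o o').mpr ⟨⟨i₀, hi₀', hne⟩, ?_⟩⟩
        intro i hi
        rcases hg i (Or.inr hi) with h | h | ⟨j, hjE, hjlt⟩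
        · exact Or.inl h
        · exact Or.inr (Or.inl h)
        · rcases hjE with (h' | h') | ⟨hj1, _⟩
          · exact absurd (hE₁ h').2 (Set.disjoint_right.mp hd hi)
          · exact Or.inr (Or.inr ⟨j, h', hjlt⟩)
          · exact absurd hjlt (by rw [hA j hj1]; exact lt_irrefl _)
  | pareto e₁ e₂ ih₁ ih₂ =>
    rintro ⟨h1, h2, hd⟩ o o'
    have hE₁ := edges_subset e₁
    have hE₂ := edges_subset e₂
    constructor
    · intro h
      have lift₁ : ∀ i ∈ e₁.vars,
          (o' i < o i ∨ o i = o' i ∨ ∃ j, (j, i) ∈ e₁.edges ∧ o' j < o j) →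
          (o' i < o i ∨ o i = o' i ∨ ∃ j, (j, i) ∈ (e₁.pareto e₂).edges ∧ o' j < o j) := by
        rintro i _ (h | h | ⟨j, hjE, hjlt⟩)
        · exact Or.inl h
        · exact Or.inr (Or.inl h)
        · exact Or.inr (Or.inr ⟨j, Or.inl hjE, hjlt⟩)
      have lift₂ : ∀ i ∈ e₂.vars,
          (o' i < o i ∨ o i = o' i ∨ ∃ j, (j, i) ∈ e₂.edges ∧ o' j < o j) →
          (o' i < o i ∨ o i = o' i ∨ ∃ j, (j, i) ∈ (e₁.pareto e₂).edges ∧ o' j < o j) := by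
        rintro i _ (h | h | ⟨j, hjE, hjlt⟩)
        · exact Or.inl h
        · exact Or.inr (Or.inl h)
        · exact Or.inr (Or.inr ⟨j, Or.inr hjE, hjlt⟩)
      rcases h with ⟨r₁, heq₂⟩ | ⟨r₂, heq₁⟩ | ⟨r₁, r₂⟩
      · obtain ⟨⟨i₀, hi₀, hne⟩, hg⟩ := (ih₁ h1 o o').mp r₁
        refine ⟨⟨i₀, Or.inl hi₀, hne⟩, ?_⟩
        rintro i (hi | hi)
        · exact lift₁ i hi (hg i hi)
        · exact Or.inr (Or.inl (heq₂ i hi))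
      · obtain ⟨⟨i₀, hi₀, hne⟩, hg⟩ := (ih₂ h2 o o').mp r₂
        refine ⟨⟨i₀, Or.inr hi₀, hne⟩, ?_⟩
        rintro i (hi | hi)
        · exact Or.inr (Or.inl (heq₁ i hi))
        · exact lift₂ i hi (hg i hi)
      · obtain ⟨⟨i₀, hi₀, hne⟩, hg₁⟩ := (ih₁ h1 o o').mp r₁
        obtain ⟨_, hg₂⟩ := (ih₂ h2 o o').mp r₂
        refine ⟨⟨i₀, Or.inl hi₀, hne⟩, ?_⟩
        rintro i (hi | hi)
        · exact lift₁ i hi (hg₁ i hi)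
        · exact lift₂ i hi (hg₂ i hi)
    · rintro ⟨⟨i₀, hi₀, hne⟩, hg⟩
      have hsat₁ : (∃ i ∈ e₁.vars, o i ≠ o' i) → e₁.rel o o' := by
        intro hA
        refine (ih₁ h1 o o').mpr ⟨hA, ?_⟩
        intro i hi
        rcases hg i (Or.inl hi) with h | h | ⟨j, hjE, hjlt⟩
        · exact Or.inl h
        · exact Or.inr (Or.inl h)
        · rcases hjE with h' | h'
          · exact Or.inr (Or.inr ⟨j, h', hjlt⟩)
          · exact absurd (hE₂ h').2 (Set.disjoint_left.mp hd hi)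
      have hsat₂ : (∃ i ∈ e₂.vars, o i ≠ o' i) → e₂.rel o o' := by
        intro hB
        refine (ih₂ h2 o o').mpr ⟨hB, ?_⟩
        intro i hi
        rcases hg i (Or.inr hi) with h | h | ⟨j, hjE, hjlt⟩
        · exact Or.inl h
        · exact Or.inr (Or.inl h)
        · rcases hjE with h' | h'
          · exact absurd (hE₁ h').2 (Set.disjoint_right.mp hd hi)
          · exact Or.inr (Or.inr ⟨j, h', hjlt⟩)
      by_cases hA : ∃ i ∈ e₁.vars, o i ≠ o' i
      · by_cases hB : ∃ i ∈ e₂.vars, o i ≠ o' i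
        · exact Or.inr (Or.inr ⟨hsat₁ hA, hsat₂ hB⟩)
        · push_neg at hB
          exact Or.inl ⟨hsat₁ hA, hB⟩
      · by_cases hB : ∃ i ∈ e₂.vars, o i ≠ o' i
        · push_neg at hA
          exact Or.inr (Or.inl ⟨hsat₂ hB, hA⟩)
        · push_neg at hA hB
          rcases hi₀ with h | h
          · exact absurd (hA i₀ h) hne
          · exact absurd (hB i₀ h) hne

variable [∀ i, Infinite (D i)]

lemma rel_mono_edges (e e' : PExpr ι) (he : e.wf) (he' : e'.wf)
    (hv' : e'.vars = Set.univ)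
    (h : ∀ o o' : ∀ i, D i, e.rel o o' → e'.rel o o') :
    e.edges ⊆ e'.edges := by
  classical
  rintro ⟨a, b⟩ hab
  by_contra hnot
  have hne : a ≠ b := by
    rintro rfl
    exact edges_irrefl e he a hab
  have ha : a ∈ e.vars := (edges_subset e hab).1
  obtain ⟨xa, ya, hxy⟩ : ∃ x y : D a, x < y := by
    obtain ⟨x, y, hxyne⟩ := exists_pair_ne (D a)
    rcases hxyne.lt_or_gt with hlt | hlt
    exacts [⟨x, y, hlt⟩, ⟨y, x, hlt⟩]
  obtain ⟨xb, yb, hxyb⟩ : ∃ x y : D b, x < y := by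
    obtain ⟨x, y, hxyne⟩ := exists_pair_ne (D b)
    rcases hxyne.lt_or_gt with hlt | hlt
    exacts [⟨x, y, hlt⟩, ⟨y, x, hlt⟩]
  have hnonempty : ∀ i, Nonempty (D i) := fun i => inferInstance
  set base : ∀ i, D i := fun i => Classical.arbitrary (D i) with hbase
  set o : ∀ i, D i := Function.update (Function.update base a ya) b xb with ho
  set o' : ∀ i, D i := Function.update (Function.update base a xa) b yb with ho'
  have hoa : o a = ya := by simp [ho, Function.update_of_ne hne]
  have hob : o b = xb := by simp [ho]
  have ho'a : o' a = xa := by simp [ho', Function.update_of_ne hne]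
  have ho'b : o' b = yb := by simp [ho']
  have hother : ∀ i, i ≠ a → i ≠ b → o i = o' i := by
    intro i hia hib
    simp [ho, ho', Function.update_of_ne hib, Function.update_of_ne hia]
  have hrel : e.rel o o' := by
    refine (rel_iff_sat e he o o').mpr ⟨⟨a, ha, by rw [hoa, ho'a]; exact hxy.ne'⟩, ?_⟩
    intro i hi
    by_cases hia : i = a
    · subst hia; exact Or.inl (by rw [hoa, ho'a]; exact hxy)
    · by_cases hib : i = b
      · subst hib
        exact Or.inr (Or.inr ⟨a, hab, by rw [hoa, ho'a]; exact hxy⟩)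
      · exact Or.inr (Or.inl (hother i hia hib))
  have hrel' := h o o' hrel
  obtain ⟨_, hg⟩ := (rel_iff_sat e' he' o o').mp hrel'
  have hb' : b ∈ e'.vars := by rw [hv']; trivial
  rcases hg b hb' with hlt | heq | ⟨j, hjE, hjlt⟩
  · rw [hob, ho'b] at hlt; exact absurd hlt (not_lt_of_gt hxyb)
  · rw [hob, ho'b] at heq; exact absurd heq hxyb.ne
  · have hja : j = a := by
      by_contra hja
      by_cases hjb : j = b
      · subst hjb; rw [hob, ho'b] at hjlt; exact absurd hjlt (not_lt_of_gt hxyb)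
      · rw [hother j hja hjb] at hjlt; exact lt_irrefl _ hjlt
    subst hja
    exact hnot hjE

lemma edges_ssubset (e e' : PExpr ι) (he : e.wf) (he' : e'.wf)
    (hv : e.vars = Set.univ) (hv' : e'.vars = Set.univ)
    (h : {p : (∀ i, D i) × (∀ i, D i) | e.rel p.1 p.2} ⊂
         {p : (∀ i, D i) × (∀ i, D i) | e'.rel p.1 p.2}) :
    e.edges ⊂ e'.edges := by
  have hsub : e.edges ⊆ e'.edges :=
    rel_mono_edges (D := D) e e' he he' hv' (fun o o' hr => h.1 (show (o, o') ∈ {p : (∀ i, D i) × (∀ i, D i) | e.rel p.1 p.2} from hr))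
  refine ⟨hsub, fun hsup => ?_⟩
  have hEeq : e.edges = e'.edges := le_antisymm hsub hsup
  have : {p : (∀ i, D i) × (∀ i, D i) | e.rel p.1 p.2} =
         {p : (∀ i, D i) × (∀ i, D i) | e'.rel p.1 p.2} := by
    ext ⟨o, o'⟩
    simp only [Set.mem_setOf_eq]
    rw [rel_iff_sat e he o o', rel_iff_sat e' he' o o']
    unfold PExprAux.sat
    rw [hv, hv', hEeq]
  rw [this] at h
  exact (lt_irrefl _ h)

end PExprAux

/-- any strictly increasing chain of full p-skyline relations over
an attribute set 𝒜 has length at most |𝒜|·(|𝒜|−1) + 1. -/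
theorem pskyline_chain_length {ι : Type*} [Fintype ι]
    {D : ι → Type*} [∀ i, LinearOrder (D i)] [∀ i, Infinite (D i)]
    (k : ℕ) (f : Fin k → PExpr ι)
    (hwf : ∀ i, (f i).wf) (hv : ∀ i, (f i).vars = Set.univ)
    (hchain : ∀ i j : Fin k, i < j →
      {p : (∀ i, D i) × (∀ i, D i) | (f i).rel p.1 p.2} ⊂
      {p : (∀ i, D i) × (∀ i, D i) | (f j).rel p.1 p.2}) :
    k ≤ Fintype.card ι * (Fintype.card ι - 1) + 1 := by
  classical
  rcases Nat.eq_zero_or_pos k with hk | hk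
  · omega
  set n := Fintype.card ι with hn
  have hbound : ∀ i : Fin k, ((f i).edges).ncard ≤ n * (n - 1) := by
    intro i
    have hsub : (f i).edges ⊆ ((Finset.univ.offDiag : Finset (ι × ι)) : Set (ι × ι)) := by
      rintro ⟨a, b⟩ hab
      simp only [Finset.coe_offDiag, Finset.coe_univ, Set.mem_offDiag, Set.mem_univ,
        true_and]
      rintro rfl
      exact PExprAux.edges_irrefl (f i) (hwf i) a hab
    calc ((f i).edges).ncard ≤ (((Finset.univ.offDiag : Finset (ι × ι)) : Set (ι × ι))).ncard :=
          Set.ncard_le_ncard hsub (Set.toFinite _)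
      _ = (Finset.univ.offDiag : Finset (ι × ι)).card := Set.ncard_coe_finset _
      _ = n * n - n := by rw [Finset.offDiag_card, Finset.card_univ]
      _ = n * (n - 1) := by
          rcases n with _ | m
          · simp
          · simp [Nat.succ_mul, Nat.mul_succ]
  have hmono : ∀ i j : Fin k, i < j → ((f i).edges).ncard < ((f j).edges).ncard := by
    intro i j hij
    exact Set.ncard_lt_ncard
      (PExprAux.edges_ssubset (f i) (f j) (hwf i) (hwf j) (hv i) (hv j) (hchain i j hij))
      (Set.toFinite _)
  have hle : ∀ m (h : m < k), m ≤ ((f ⟨m, h⟩).edges).ncard := by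
    intro m
    induction m with
    | zero => intro _; exact Nat.zero_le _
    | succ p ih =>
      intro h
      have h' : p < k := Nat.lt_of_succ_lt h
      have h1 := hmono ⟨p, h'⟩ ⟨p + 1, h⟩ (by simp [Fin.lt_def])
      have h2 := ih h'
      omega
  have h1 := hle (k - 1) (by omega)
  have h2 := hbound ⟨k - 1, by omega⟩
  omega
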